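/- For every n ≥ 1 and k ≥ 1, the family F = {{1,2,...,k-1, jk} : j = 1,...,n} of n ships of size k is pierced by the pattern X = kℤ, which has density exactly 1/k. Hence the infimum m_k^n of π over families of n k-ships equals 1/k. -/

import Mathlib

/-- A shooting pattern `X` hits a ship `S` if every translate of `S` intersects `X`. -/
def Hits (X S : Set ℤ) : Prop := ∀ n : ℤ, ∃ s ∈ S, n + s ∈ X

/-- Lower asymptotic density of a set of integers. -/
noncomputable def lowerDensity (X : Set ℤ) : ℝ :=
  Filter.liminf (fun N : ℕ =>
    ((X ∩ Set.Icc (-(N:ℤ)) (N:ℤ)).ncard : ℝ) / (2 * N + 1)) Filter.atTop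

/-- Optimal piercing density of a family of ships. -/
noncomputable def piercing (F : Set (Set ℤ)) : ℝ :=
  sInf (lowerDensity '' {X | ∀ S ∈ F, Hits X S})

/-!
If `X` hits a finite ship `S ⊆ [-C, C]`, every point of `[-N, N]` has the form `x - s` with
`s ∈ S` and `x ∈ X ∩ [-N-C, N+C]`, so that window contains at least `(2N+1)/|S|` points of `X`;
hence `X` has lower density at least `1/|S|`, and every family of `k`-ships has `π ≥ 1/k`.
Conversely each ship `{1, …, k-1, jk}` meets every residue class mod `k`, so `kℤ` hits all of
them, and `kℤ` has density exactly `1/k`.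
-/

open Filter Set Topology Pointwise

noncomputable def windowDensity (X : Set ℤ) (N : ℕ) : ℝ :=
  ((X ∩ Icc (-(N : ℤ)) N).ncard : ℝ) / (2 * N + 1)

theorem lowerDensity_eq_liminf (X : Set ℤ) :
    lowerDensity X = liminf (windowDensity X) atTop := rfl

theorem Int.ncard_Icc (a b : ℤ) : (Icc a b).ncard = (b + 1 - a).toNat := by
  rw [← Finset.coe_Icc, ncard_coe_finset, Int.card_Icc]

theorem windowDensity_nonneg (X : Set ℤ) (N : ℕ) : 0 ≤ windowDensity X N := by
  unfold windowDensity; positivity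

theorem windowDensity_le_one (X : Set ℤ) (N : ℕ) : windowDensity X N ≤ 1 := by
  have hcard : (X ∩ Icc (-(N : ℤ)) N).ncard ≤ 2 * N + 1 := by
    calc (X ∩ Icc (-(N : ℤ)) N).ncard ≤ (Icc (-(N : ℤ)) N).ncard :=
          ncard_le_ncard inter_subset_right (finite_Icc _ _)
      _ = 2 * N + 1 := by rw [Int.ncard_Icc]; omega
  rw [windowDensity, div_le_one (by positivity)]
  exact_mod_cast hcard

theorem le_lowerDensity_of_tendsto {X : Set ℤ} {f : ℕ → ℝ} {a : ℝ}
    (hf : Tendsto f atTop (𝓝 a)) (hle : ∀ᶠ N in atTop, f N ≤ windowDensity X N) :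
    a ≤ lowerDensity X := by
  have hcobdd : IsCoboundedUnder (· ≥ ·) atTop (windowDensity X) :=
    (isBoundedUnder_of ⟨1, windowDensity_le_one X⟩).isCoboundedUnder_ge
  rw [lowerDensity_eq_liminf, ← hf.liminf_eq]
  exact liminf_le_liminf hle hf.isBoundedUnder_ge hcobdd

theorem lowerDensity_nonneg (X : Set ℤ) : 0 ≤ lowerDensity X :=
  le_lowerDensity_of_tendsto tendsto_const_nhds (.of_forall (windowDensity_nonneg X))

theorem tendsto_two_mul_add_one_add_div (c : ℝ) :
    Tendsto (fun N : ℕ => (2 * N + 1 + c) / (2 * N + 1)) atTop (𝓝 1) := by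
  have hden : Tendsto (fun N : ℕ => 2 * (N : ℝ) + 1) atTop atTop :=
    tendsto_atTop_add_const_right _ _
      (tendsto_natCast_atTop_atTop.const_mul_atTop two_pos)
  have hsmall := (tendsto_const_nhds (x := c)).div_atTop hden
  refine (by simpa using hsmall.const_add 1 : Tendsto _ _ _).congr fun N => ?_
  have : 2 * (N : ℝ) + 1 ≠ 0 := by positivity
  field_simp

theorem two_mul_add_one_le_ncard_mul_ncard_of_hits {X S : Set ℤ} {C : ℕ} (hS : S.Finite)
    (hC : ∀ s ∈ S, s.natAbs ≤ C) (h : Hits X S) (N : ℕ) :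
    2 * N + 1 ≤ (X ∩ Icc (-(N + C : ℤ)) (N + C)).ncard * S.ncard := by
  have hcover : Icc (-(N : ℤ)) N ⊆ (X ∩ Icc (-(N + C : ℤ)) (N + C)) - S := by
    intro m ⟨hm₁, hm₂⟩
    obtain ⟨s, hs, hms⟩ := h m
    have hs' := hC s hs
    exact ⟨m + s, ⟨hms, by omega, by omega⟩, s, hs, add_sub_cancel_right m s⟩
  calc 2 * N + 1 = (Icc (-(N : ℤ)) N).ncard := by rw [Int.ncard_Icc]; omega
    _ ≤ ((X ∩ Icc (-(N + C : ℤ)) (N + C)) - S).ncard :=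
        ncard_le_ncard hcover (((finite_Icc _ _).subset inter_subset_right).sub hS)
    _ ≤ _ := natCard_sub_le

theorem inv_ncard_le_lowerDensity_of_hits {X S : Set ℤ} (hS : S.Finite) (h : Hits X S) :
    (S.ncard : ℝ)⁻¹ ≤ lowerDensity X := by
  obtain ⟨C, hC⟩ := (hS.image Int.natAbs).bddAbove
  have hC' : ∀ s ∈ S, s.natAbs ≤ C := fun s hs => hC (mem_image_of_mem _ hs)
  have hpos : (0 : ℝ) < S.ncard := by
    obtain ⟨s, hs, -⟩ := h 0
    exact_mod_cast (ncard_pos hS).2 ⟨s, hs⟩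
  refine le_lowerDensity_of_tendsto (f := fun M : ℕ => (S.ncard : ℝ)⁻¹ *
    ((2 * M + 1 + -(2 * C)) / (2 * M + 1))) (by simpa using
      (tendsto_two_mul_add_one_add_div _).const_mul (S.ncard : ℝ)⁻¹) ?_
  filter_upwards [eventually_ge_atTop C] with M hM
  obtain ⟨N, rfl⟩ : ∃ N, M = N + C := ⟨M - C, by omega⟩
  have hcount : (2 * N + 1 : ℝ) ≤
      (X ∩ Icc (-((N + C : ℕ) : ℤ)) (N + C : ℕ)).ncard * S.ncard := by
    exact_mod_cast two_mul_add_one_le_ncard_mul_ncard_of_hits hS hC' h N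
  rw [windowDensity, ← mul_div_assoc, div_le_div_iff_of_pos_right (by positivity),
    inv_mul_le_iff₀ hpos]
  push_cast at hcount ⊢
  linarith

theorem ncard_setOf_dvd_inter_Icc {k : ℕ} (hk : 0 < k) (N : ℕ) :
    ({c : ℤ | (k : ℤ) ∣ c} ∩ Icc (-(N : ℤ)) N).ncard = 2 * (N / k) + 1 := by
  have hk' : (0 : ℤ) < k := by exact_mod_cast hk
  have himage : {c : ℤ | (k : ℤ) ∣ c} ∩ Icc (-(N : ℤ)) N =
      (· * (k : ℤ)) '' Icc (-((N / k : ℕ) : ℤ)) (N / k : ℕ) := by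
    ext c
    simp only [mem_inter_iff, mem_ofPred_eq, mem_Icc, mem_image, neg_le, Int.natCast_ediv,
      Int.le_ediv_iff_mul_le hk']
    constructor
    · rintro ⟨⟨q, rfl⟩, h₁, h₂⟩
      exact ⟨q, ⟨by linarith, by linarith⟩, mul_comm q k⟩
    · rintro ⟨q, ⟨h₁, h₂⟩, rfl⟩
      exact ⟨dvd_mul_left _ _, by linarith, h₂⟩
  rw [himage, ncard_image_of_injective _ (mul_left_injective₀ hk'.ne'), Int.ncard_Icc]
  omega

theorem tendsto_windowDensity_setOf_dvd {k : ℕ} (hk : 0 < k) :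
    Tendsto (windowDensity {c : ℤ | (k : ℤ) ∣ c}) atTop (𝓝 (1 / k)) := by
  have hk' : (0 : ℝ) < k := by exact_mod_cast hk
  have hlim (c : ℝ) : Tendsto (fun N : ℕ => (k : ℝ)⁻¹ * ((2 * N + 1 + c) / (2 * N + 1)))
      atTop (𝓝 (1 / k)) := by
    simpa using (tendsto_two_mul_add_one_add_div c).const_mul (k : ℝ)⁻¹
  have hbounds (N : ℕ) : (2 * N + 2 : ℝ) ≤ k * (2 * (N / k : ℕ) + 1) + k ∧
      (k * (2 * (N / k : ℕ) + 1) : ℝ) ≤ 2 * N + k := by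
    have hdiv := Nat.div_add_mod N k
    have hmod := Nat.mod_lt N hk
    constructor <;> norm_cast <;> nlinarith [Nat.zero_le (N % k)]
  have hwindow (N : ℕ) : windowDensity {c : ℤ | (k : ℤ) ∣ c} N =
      (k : ℝ)⁻¹ * ((k * (2 * (N / k : ℕ) + 1) : ℝ) / (2 * N + 1)) := by
    rw [windowDensity, ncard_setOf_dvd_inter_Icc hk, ← mul_div_assoc,
      inv_mul_cancel_left₀ hk'.ne']
    push_cast
    ring
  refine tendsto_of_tendsto_of_tendsto_of_le_of_le (hlim (1 - k)) (hlim (k - 1))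
    (fun N => ?_) (fun N => ?_) <;> rw [hwindow] <;> gcongr <;> linarith [hbounds N]

theorem lowerDensity_setOf_dvd {k : ℕ} (hk : 0 < k) :
    lowerDensity {c : ℤ | (k : ℤ) ∣ c} = 1 / k := by
  rw [lowerDensity_eq_liminf]
  exact (tendsto_windowDensity_setOf_dvd hk).liminf_eq

theorem hits_setOf_dvd_of_forall_exists_modEq {k : ℤ} {S : Set ℤ}
    (hS : ∀ r : ℤ, ∃ s ∈ S, s ≡ r [ZMOD k]) : Hits {c : ℤ | k ∣ c} S := fun n => by
  obtain ⟨s, hs, hsn⟩ := hS (-n)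
  exact ⟨s, hs, by simpa [add_comm] using hsn.symm.dvd⟩

theorem hits_univ {S : Set ℤ} (hS : S.Nonempty) : Hits univ S := fun _ =>
  ⟨hS.some, hS.some_mem, mem_univ _⟩

def ship (k : ℕ) (j : ℤ) : Set ℤ := {m : ℤ | (1 ≤ m ∧ m ≤ (k : ℤ) - 1) ∨ m = j * k}

theorem ship_eq_insert (k : ℕ) (j : ℤ) : ship k j = insert (j * k) (Icc 1 ((k : ℤ) - 1)) := by
  ext m
  simp only [ship, mem_ofPred_eq, mem_insert_iff, mem_Icc, or_comm]

theorem ship_finite (k : ℕ) (j : ℤ) : (ship k j).Finite := by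
  rw [ship_eq_insert]
  exact (finite_Icc _ _).insert _

theorem ncard_ship {k : ℕ} {j : ℤ} (hk : 0 < k) (hj : 1 ≤ j) : (ship k j).ncard = k := by
  have hnotMem : j * k ∉ Icc 1 ((k : ℤ) - 1) := fun ⟨_, h⟩ => by nlinarith
  rw [ship_eq_insert, ncard_insert_of_notMem hnotMem (finite_Icc _ _), Int.ncard_Icc]
  omega

theorem exists_mem_ship_modEq {k : ℕ} (hk : 0 < k) (j r : ℤ) :
    ∃ s ∈ ship k j, s ≡ r [ZMOD k] := by
  have hk' : (0 : ℤ) < k := by exact_mod_cast hk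
  by_cases hr : r % k = 0
  · exact ⟨j * k, Or.inr rfl, by simp [Int.ModEq, hr]⟩
  · have hr₀ := Int.emod_nonneg r hk'.ne'
    have hrk := Int.emod_lt_of_pos r hk'
    exact ⟨r % k, Or.inl ⟨by omega, by omega⟩, Int.mod_modEq r k⟩

theorem piercing_le_lowerDensity {F : Set (Set ℤ)} {X : Set ℤ} (hX : ∀ S ∈ F, Hits X S) :
    piercing F ≤ lowerDensity X :=
  csInf_le ⟨0, by rintro _ ⟨Y, -, rfl⟩; exact lowerDensity_nonneg Y⟩ ⟨X, hX, rfl⟩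

theorem inv_ncard_le_piercing {F : Set (Set ℤ)} {S : Set ℤ} (hF : ∀ T ∈ F, T.Nonempty)
    (hS : S ∈ F) (hSfin : S.Finite) : (S.ncard : ℝ)⁻¹ ≤ piercing F :=
  le_csInf ⟨_, univ, fun T hT => hits_univ (hF T hT), rfl⟩ <| by
    rintro _ ⟨X, hX, rfl⟩
    exact inv_ncard_le_lowerDensity_of_hits hSfin (hX S hS)

theorem stmt9 (n k : ℕ) (hn : 1 ≤ n) (hk : 1 ≤ k) :
    (∀ j : ℤ, 1 ≤ j → j ≤ (n : ℤ) →
      Hits {c : ℤ | (k : ℤ) ∣ c} {m : ℤ | (1 ≤ m ∧ m ≤ (k : ℤ) - 1) ∨ m = j * k}) ∧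
    lowerDensity {c : ℤ | (k : ℤ) ∣ c} = 1 / k ∧
    IsGLB {x : ℝ | ∃ T : Fin n → Set ℤ, (∀ i, (T i).Finite ∧ (T i).ncard = k) ∧
      x = piercing {S | ∃ i, S = T i}} (1 / k) := by
  have hits_ship (j : ℤ) : Hits {c : ℤ | (k : ℤ) ∣ c} (ship k j) :=
    hits_setOf_dvd_of_forall_exists_modEq (exists_mem_ship_modEq hk j)
  have one_div_le_piercing (T : Fin n → Set ℤ) (hT : ∀ i, (T i).Finite ∧ (T i).ncard = k) :
      1 / (k : ℝ) ≤ piercing {S | ∃ i, S = T i} := by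
    have hne : ∀ S ∈ {S | ∃ i, S = T i}, S.Nonempty := by
      rintro _ ⟨i, rfl⟩
      exact nonempty_of_ncard_ne_zero (by rw [(hT i).2]; omega)
    have i₀ : Fin n := ⟨0, hn⟩
    simpa [(hT i₀).2] using inv_ncard_le_piercing hne ⟨i₀, rfl⟩ (hT i₀).1
  refine ⟨fun j _ _ => hits_ship j, lowerDensity_setOf_dvd hk, IsLeast.isGLB ⟨?_, ?_⟩⟩
  · have hT (i : Fin n) : (ship k (i + 1)).Finite ∧ (ship k (i + 1)).ncard = k :=
      ⟨ship_finite k _, ncard_ship hk (by omega)⟩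
    refine ⟨fun i => ship k (i + 1), hT, le_antisymm (one_div_le_piercing _ hT) ?_⟩
    rw [← lowerDensity_setOf_dvd hk]
    exact piercing_le_lowerDensity (by rintro _ ⟨i, rfl⟩; exact hits_ship _)
  · rintro _ ⟨T, hT, rfl⟩
    exact one_div_le_piercing T hT
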